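/- For k, t ∈ ℤ, the glide-reflection of the plane whose axis is the anti-diagonal line y = −x + k and whose glide is the translation by (t, −t), inducing the cell map (i,j) ↦ (k − 1 − j + t, k − 1 − i − t), preserves the thick-striping doubled checkerboard colouring d if and only if k and t are both even. -/

import Mathlib

/-- The thick-striping (doubled) checkerboard colouring of cells:
`d i j = ⌊i/2⌋ + ⌊j/2⌋ (mod 2)` (floor division). -/
def thickColour (i j : ℤ) : ZMod 2 := ((Int.fdiv i 2 + Int.fdiv j 2 : ℤ) : ZMod 2)

/-!
Floor division by `2` turns the reflection `x ↦ 2a - 1 - x` into `q ↦ a - 1 - q`, so for even `k`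
and `t` the cell map negates `⌊i/2⌋ + ⌊j/2⌋` up to an even shift, which is invisible mod 2.
Conversely, the cells `(0,0)`, `(1,0)`, `(0,1)` share a colour, and a column or row step `j ↦ j + 1`
keeps the colour exactly when `j` is even; comparing their images forces `k ± t` to be even, and
then the colour of the image of `(0,0)`, which must be `0`, is `(k + t)/2 + (k - t)/2 ≡ k` mod 2.
-/

lemma Int.mul_sub_one_sub_ediv {n : ℤ} (hn : 0 < n) (a x : ℤ) :
    (n * a - 1 - x) / n = a - 1 - x / n := by
  have hmod := Int.emod_nonneg x hn.ne'
  have hlt := Int.emod_lt_of_pos x hn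
  have hx : n * a - 1 - x = (n - 1 - x % n) + n * (a - 1 - x / n) := by
    linear_combination Int.mul_ediv_add_emod x n
  rw [hx, Int.add_mul_ediv_left _ _ hn.ne', Int.ediv_eq_zero_of_lt (by omega) (by omega), zero_add]

lemma thickColour_eq_ediv (i j : ℤ) : thickColour i j = ((i / 2 + j / 2 : ℤ) : ZMod 2) := by
  simp only [thickColour, Int.fdiv_eq_ediv_of_nonneg _ zero_le_two]

lemma thickColour_comm (i j : ℤ) : thickColour i j = thickColour j i := by
  rw [thickColour, thickColour, add_comm]

lemma thickColour_add_one_right_eq_iff (i j : ℤ) :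
    thickColour i (j + 1) = thickColour i j ↔ Even j := by
  rw [thickColour_eq_ediv, thickColour_eq_ediv, ZMod.intCast_eq_intCast_iff', Int.even_iff]
  omega

lemma thickColour_add_one_left_eq_iff (i j : ℤ) :
    thickColour (i + 1) j = thickColour i j ↔ Even i := by
  rw [thickColour_comm, thickColour_comm i, thickColour_add_one_right_eq_iff]

lemma thickColour_two_mul_sub_one (u v : ℤ) :
    thickColour (2 * u - 1) (2 * v - 1) = ((u + v : ℤ) : ZMod 2) := by
  rw [thickColour_eq_ediv, ZMod.intCast_eq_intCast_iff_dvd_sub]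
  exact ⟨1, by omega⟩

lemma thickColour_glideReflection_of_even (a b i j : ℤ) :
    thickColour (2 * a - 1 - j + 2 * b) (2 * a - 1 - i - 2 * b) = thickColour i j := by
  rw [show 2 * a - 1 - j + 2 * b = 2 * (a + b) - 1 - j by ring,
    show 2 * a - 1 - i - 2 * b = 2 * (a - b) - 1 - i by ring, thickColour_eq_ediv,
    thickColour_eq_ediv, Int.mul_sub_one_sub_ediv two_pos, Int.mul_sub_one_sub_ediv two_pos,
    ZMod.intCast_eq_intCast_iff_dvd_sub]
  exact ⟨i / 2 + j / 2 - a + 1, by ring⟩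

lemma even_and_even_of_glideReflection_preserves_thickColour {k t : ℤ}
    (H : ∀ i j : ℤ, thickColour (k - 1 - j + t) (k - 1 - i - t) = thickColour i j) :
    Even k ∧ Even t := by
  have h00 : thickColour (k - 1 + t) (k - 1 - t) = 0 := by
    simpa [sub_sub] using (H 0 0).trans (by decide : thickColour 0 0 = 0)
  have h10 : thickColour (k - 1 + t) (k - 2 - t) = 0 := by
    simpa [sub_sub] using (H 1 0).trans (by decide : thickColour 1 0 = 0)
  have h01 : thickColour (k - 2 + t) (k - 1 - t) = 0 := by
    simpa [sub_sub] using (H 0 1).trans (by decide : thickColour 0 1 = 0)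
  have hsub : Even (k - 2 - t) := by
    rw [← thickColour_add_one_right_eq_iff (k - 1 + t), h10]
    convert h00 using 2; ring
  have hadd : Even (k - 2 + t) := by
    rw [← thickColour_add_one_left_eq_iff _ (k - 1 - t), h01]
    convert h00 using 2; ring
  obtain ⟨u, hu⟩ := hadd
  obtain ⟨v, hv⟩ := hsub
  have huv : Even (u + 1 + (v + 1)) := by
    rw [← ZMod.intCast_eq_zero_iff_even, ← thickColour_two_mul_sub_one, ← h00]
    congr 1 <;> omega
  simp only [Int.even_iff] at huv ⊢
  omega

/-- The glide-reflection with axis `y = −x + k` and glide `(t, −t)`, inducing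
the cell map `(i,j) ↦ (k − 1 − j + t, k − 1 − i − t)`, preserves the
thick-striping doubled checkerboard colouring iff `k` and `t` are both even. -/
theorem antidiagonal_glideReflection_preserves_thickColour_iff (k t : ℤ) :
    (∀ i j : ℤ, thickColour (k - 1 - j + t) (k - 1 - i - t) = thickColour i j) ↔
      (Even k ∧ Even t) := by
  refine ⟨even_and_even_of_glideReflection_preserves_thickColour, ?_⟩
  rintro ⟨⟨a, rfl⟩, ⟨b, rfl⟩⟩ i j
  simpa only [← two_mul] using thickColour_glideReflection_of_even a b i j
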